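/- arXiv:2410.19568 — 5 statements merged into one kernel-verified Lean document; each statement's English description precedes it below -/
import Mathlib

section
/- Suppose the material is macro-homogeneous at scale r₀, and suppose C_{r₀} := Σ_{r : |r| > r₀} |X_r|/|X| is strictly positive. Define the random variable Ψ : Ω → ℝ by Ψ(ω) = (1/C_{r₀}) · Σ_{r : |r| ≤ r₀} (|X_r|/|X|) · (T_r(ω) − Φ(ω)²). Then E[Ψ] = Var[Φ]; that is, the TPC-based single-image predictor Ψ is an unbiased estimator of the variance of the phase fraction. -/
/-! Sorting the pairs `(x, x')` of `X × X` by their difference `r = x - x'` gives, for every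
image, `|X|² Φ² = Σ_r |X_r| T_r` and `|X|² = Σ_r |X_r|`, so that `Σ_r |X_r| (T_r - Φ²) = 0`.
Taking expectations, the weighted sum of `E[T_r] - E[Φ²]` over all lags vanishes. On the far
lags `E[T_r] = E[Φ]²`, so the sum over the near lags equals `C_{r₀} (E[Φ²] - E[Φ]²)`. -/

open MeasureTheory Finset
open scoped Classical
open scoped Pointwise

theorem card_mul_one_div_card_mul_sum {ι K : Type*} [Field K] [CharZero K] (s : Finset ι)
    (f : ι → K) : (#s : K) * (1 / #s * ∑ i ∈ s, f i) = ∑ i ∈ s, f i := by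
  rcases s.eq_empty_or_nonempty with rfl | hs
  · simp
  · rw [one_div, mul_inv_cancel_left₀ (mod_cast hs.card_pos.ne')]

theorem abs_one_div_card_mul_sum_le_one {ι : Type*} (s : Finset ι) (f : ι → ℝ)
    (hf : ∀ i ∈ s, |f i| ≤ 1) : |1 / #s * ∑ i ∈ s, f i| ≤ 1 := by
  rcases s.eq_empty_or_nonempty with rfl | hs
  · simp
  have hcard : (0 : ℝ) < #s := mod_cast hs.card_pos
  calc |1 / #s * ∑ i ∈ s, f i| ≤ 1 / #s * ∑ i ∈ s, |f i| := by
        rw [abs_mul, abs_of_pos (by positivity)]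
        gcongr
        exact abs_sum_le_sum_abs _ _
    _ ≤ 1 / #s * #s := by
        gcongr
        simpa using sum_le_card_nsmul s _ 1 hf
    _ = 1 := by field_simp

theorem sum_filter_mul_sub_eq_sum_filter_not_mul {ι R : Type*} [CommRing R] (s : Finset ι)
    (p : ι → Prop) [DecidablePred p] (w t : ι → R) (q m : R)
    (hs : ∑ i ∈ s, w i * (t i - q) = 0) (hm : ∀ i ∈ s, ¬p i → t i = m) :
    ∑ i ∈ s with p i, w i * (t i - q) = (∑ i ∈ s with ¬p i, w i) * (q - m) := by
  have hfar : ∑ i ∈ s with ¬p i, w i * (t i - q) = (∑ i ∈ s with ¬p i, w i) * (m - q) := by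
    rw [sum_mul]
    refine sum_congr rfl fun i hi => ?_
    obtain ⟨his, hpi⟩ := mem_filter.1 hi
    rw [hm i his hpi]
  rw [← sum_filter_add_sum_filter_not s p, hfar] at hs
  linear_combination hs

theorem integral_sum_mul_sub {Ω ι : Type*} [MeasurableSpace Ω] (μ : Measure Ω) (s : Finset ι)
    (w : ι → ℝ) {f : ι → Ω → ℝ} {g : Ω → ℝ} (hf : ∀ i ∈ s, Integrable (f i) μ)
    (hg : Integrable g μ) :
    ∫ ω, ∑ i ∈ s, w i * (f i ω - g ω) ∂μ = ∑ i ∈ s, w i * (∫ ω, f i ω ∂μ - ∫ ω, g ω ∂μ) := by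
  rw [integral_finsetSum (f := fun i ω => w i * (f i ω - g ω)) s
    fun i hi => ((hf i hi).sub hg).const_mul (w i)]
  refine sum_congr rfl fun i hi => ?_
  rw [integral_const_mul, integral_sub (hf i hi) hg]

section Correlation

variable {G K : Type*}

def phaseFraction [Field K] (X : Finset G) (b : G → K) : K := 1 / #X * ∑ x ∈ X, b x

def lagSet [AddCommGroup G] [DecidableEq G] (X : Finset G) (r : G) : Finset G :=
  X.filter (· + r ∈ X)

def twoPointCorrelation [Field K] [AddCommGroup G] [DecidableEq G] (X : Finset G) (b : G → K)
    (r : G) : K :=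
  1 / #(lagSet X r) * ∑ x ∈ lagSet X r, b x * b (x + r)

theorem sum_product_eq_sum_sub_sum_lagSet {M : Type*} [AddCommMonoid M] [AddCommGroup G]
    [DecidableEq G] (X : Finset G) (f : G → G → M) :
    ∑ p ∈ X ×ˢ X, f p.1 p.2 = ∑ r ∈ X - X, ∑ x ∈ lagSet X r, f (x + r) x := by
  rw [← sum_fiberwise_of_maps_to (g := fun p : G × G => p.1 - p.2) (t := X - X)
    fun p hp => sub_def (s := X) ▸ mem_image_of_mem _ hp]
  refine sum_congr rfl fun r _ => sum_nbij' Prod.snd (fun x => (x + r, x)) ?_ ?_ ?_ ?_ ?_ <;>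
    simp +contextual [lagSet] <;> rintro a b ha - rfl <;> simp [ha]

theorem card_sq_eq_sum_card_lagSet [AddCommGroup G] [DecidableEq G] (X : Finset G) :
    #X ^ 2 = ∑ r ∈ X - X, #(lagSet X r) := by
  simpa [sq] using sum_product_eq_sum_sub_sum_lagSet X fun _ _ => (1 : ℕ)

theorem sum_sq_eq_sum_sum_lagSet_mul_add {R : Type*} [CommSemiring R] [AddCommGroup G]
    [DecidableEq G] (X : Finset G) (b : G → R) :
    (∑ x ∈ X, b x) ^ 2 = ∑ r ∈ X - X, ∑ x ∈ lagSet X r, b x * b (x + r) := by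
  rw [sq, sum_mul_sum, ← sum_product', sum_product_eq_sum_sub_sum_lagSet X fun a c => b a * b c]
  exact sum_congr rfl fun r _ => sum_congr rfl fun x _ => mul_comm _ _

theorem sum_card_lagSet_mul_twoPointCorrelation_sub_sq [Field K] [CharZero K] [AddCommGroup G]
    [DecidableEq G] (X : Finset G) (b : G → K) :
    ∑ r ∈ X - X, #(lagSet X r) * (twoPointCorrelation X b r - phaseFraction X b ^ 2) = 0 := by
  simp only [mul_sub, sum_sub_distrib, twoPointCorrelation, card_mul_one_div_card_mul_sum,
    ← sum_mul]
  rw [← sum_sq_eq_sum_sum_lagSet_mul_add, ← Nat.cast_sum, ← card_sq_eq_sum_card_lagSet,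
    Nat.cast_pow, ← mul_pow, phaseFraction, card_mul_one_div_card_mul_sum, sub_self]

theorem abs_phaseFraction_le_one (X : Finset G) {b : G → ℝ} (hb : ∀ x, |b x| ≤ 1) :
    |phaseFraction X b| ≤ 1 :=
  abs_one_div_card_mul_sum_le_one _ _ fun x _ => hb x

theorem abs_twoPointCorrelation_le_one [AddCommGroup G] [DecidableEq G] (X : Finset G)
    {b : G → ℝ} (hb : ∀ x, |b x| ≤ 1) (r : G) : |twoPointCorrelation X b r| ≤ 1 :=
  abs_one_div_card_mul_sum_le_one _ _ fun x _ => by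
    rw [abs_mul]
    exact mul_le_one₀ (hb _) (abs_nonneg _) (hb _)

variable {Ω : Type*} [MeasurableSpace Ω] {μ : Measure Ω} [IsFiniteMeasure μ] {B : G → Ω → ℝ}

theorem memLp_phaseFraction (X : Finset G) (hB : ∀ x, Measurable (B x))
    (hB1 : ∀ x ω, |B x ω| ≤ 1) (p : ENNReal) : MemLp (fun ω => phaseFraction X (B · ω)) p μ :=
  .of_bound (by unfold phaseFraction; fun_prop) 1
    (ae_of_all _ fun ω => abs_phaseFraction_le_one X (hB1 · ω))

theorem integrable_twoPointCorrelation [AddCommGroup G] [DecidableEq G] (X : Finset G)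
    (hB : ∀ x, Measurable (B x)) (hB1 : ∀ x ω, |B x ω| ≤ 1) (r : G) :
    Integrable (fun ω => twoPointCorrelation X (B · ω) r) μ :=
  .of_bound (by unfold twoPointCorrelation; fun_prop) 1
    (ae_of_all _ fun ω => abs_twoPointCorrelation_le_one X (hB1 · ω) r)

end Correlation

theorem tpc_predictor_unbiased_general
    {Ω : Type*} [MeasurableSpace Ω] (P : Measure Ω) [IsProbabilityMeasure P]
    (X : Finset (ℤ × ℤ))
    (B : ℤ × ℤ → Ω → ℝ)
    (hBmeas : ∀ x, Measurable (B x))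
    (hB01 : ∀ x ω, B x ω = 0 ∨ B x ω = 1)
    (Φ : Ω → ℝ)
    (hΦ : ∀ ω, Φ ω = (1 / (X.card : ℝ)) * ∑ x ∈ X, B x ω)
    (Xr : ℤ × ℤ → Finset (ℤ × ℤ))
    (hXr : ∀ r, Xr r = X.filter (fun x => x + r ∈ X))
    (T : ℤ × ℤ → Ω → ℝ)
    (hT : ∀ r ω, T r ω = (1 / ((Xr r).card : ℝ)) * ∑ x ∈ Xr r, B x ω * B (x + r) ω)
    (D : Finset (ℤ × ℤ))
    (hD : D = (X ×ˢ X).image (fun p => p.1 - p.2))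
    (r₀ : ℝ)
    (hmacro : ∀ r ∈ D, r₀ < Real.sqrt ((r.1 : ℝ) ^ 2 + (r.2 : ℝ) ^ 2) →
      ∫ ω, T r ω ∂P = (∫ ω, Φ ω ∂P) ^ 2)
    (C : ℝ)
    (hC : C = ∑ r ∈ D.filter (fun r => r₀ < Real.sqrt ((r.1 : ℝ) ^ 2 + (r.2 : ℝ) ^ 2)),
      ((Xr r).card : ℝ) / (X.card : ℝ))
    (hCpos : 0 < C)
    (Ψ : Ω → ℝ)
    (hΨ : ∀ ω, Ψ ω = (1 / C) *
      ∑ r ∈ D.filter (fun r => Real.sqrt ((r.1 : ℝ) ^ 2 + (r.2 : ℝ) ^ 2) ≤ r₀),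
        (((Xr r).card : ℝ) / (X.card : ℝ)) * (T r ω - (Φ ω) ^ 2)) :
    ∫ ω, Ψ ω ∂P = ProbabilityTheory.variance Φ P := by
  obtain rfl : Xr = lagSet X := funext hXr
  obtain rfl : D = X - X := hD.trans sub_def.symm
  obtain rfl : Φ = fun ω => phaseFraction X (B · ω) := funext hΦ
  obtain rfl : T = fun r ω => twoPointCorrelation X (B · ω) r := funext₂ hT
  beta_reduce at hmacro hΨ
  have hB1 : ∀ x ω, |B x ω| ≤ 1 := fun x ω => by rcases hB01 x ω with h | h <;> simp [h]
  have hΦL2 := memLp_phaseFraction (μ := P) X hBmeas hB1 2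
  have hT_int := integrable_twoPointCorrelation (μ := P) X hBmeas hB1
  have hzero : ∑ r ∈ X - X, (#(lagSet X r) / #X : ℝ) *
      (∫ ω, twoPointCorrelation X (B · ω) r ∂P - ∫ ω, phaseFraction X (B · ω) ^ 2 ∂P) = 0 := by
    rw [← integral_sum_mul_sub P _ _ (fun r _ => hT_int r) hΦL2.integrable_sq]
    simp only [div_mul_eq_mul_div, ← sum_div, sum_card_lagSet_mul_twoPointCorrelation_sub_sq,
      zero_div, integral_zero]
  have hfar : ∀ r ∈ X - X, ¬√((r.1 : ℝ) ^ 2 + (r.2 : ℝ) ^ 2) ≤ r₀ →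
      ∫ ω, twoPointCorrelation X (B · ω) r ∂P = (∫ ω, phaseFraction X (B · ω) ∂P) ^ 2 :=
    fun r hr h => hmacro r hr (not_le.1 h)
  rw [ProbabilityTheory.variance_eq_sub hΦL2, integral_congr_ae (ae_of_all _ hΨ),
    integral_const_mul, integral_sum_mul_sub P _ _ (fun r _ => hT_int r) hΦL2.integrable_sq,
    sum_filter_mul_sub_eq_sum_filter_not_mul _ _ _ _ _ _ hzero hfar]
  simp only [not_le, ← hC, Pi.pow_apply]
  rw [one_div, inv_mul_cancel_left₀ hCpos.ne']

/-- Under macro-homogeneity at scale `r₀` and positivity of the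
normalisation constant `C = Σ_{|r| > r₀} |X_r|/|X|`, the TPC-based single-image
predictor `Ψ(ω) = (1/C) Σ_{|r| ≤ r₀} (|X_r|/|X|) (T_r(ω) − Φ(ω)²)` is an
unbiased estimator of the variance of the phase fraction: `E[Ψ] = Var[Φ]`. -/
theorem tpc_predictor_unbiased
    {Ω : Type*} [MeasurableSpace Ω] (P : Measure Ω) [IsProbabilityMeasure P]
    (l₁ l₂ : ℕ) (hl₁ : 0 < l₁) (hl₂ : 0 < l₂)
    (X : Finset (ℤ × ℤ))
    (hX : X = (Finset.Ico (0 : ℤ) (l₁ : ℤ)) ×ˢ (Finset.Ico (0 : ℤ) (l₂ : ℤ)))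
    (B : ℤ × ℤ → Ω → ℝ)
    (hBmeas : ∀ x, Measurable (B x))
    (hB01 : ∀ x ω, B x ω = 0 ∨ B x ω = 1)
    (Φ : Ω → ℝ)
    (hΦ : ∀ ω, Φ ω = (1 / (X.card : ℝ)) * ∑ x ∈ X, B x ω)
    (Xr : ℤ × ℤ → Finset (ℤ × ℤ))
    (hXr : ∀ r, Xr r = X.filter (fun x => x + r ∈ X))
    (T : ℤ × ℤ → Ω → ℝ)
    (hT : ∀ r ω, T r ω = (1 / ((Xr r).card : ℝ)) * ∑ x ∈ Xr r, B x ω * B (x + r) ω)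
    (D : Finset (ℤ × ℤ))
    (hD : D = (X ×ˢ X).image (fun p => p.1 - p.2))
    (r₀ : ℝ) (hr₀ : 0 < r₀)
    (hmacro : ∀ r ∈ D, r₀ < Real.sqrt ((r.1 : ℝ) ^ 2 + (r.2 : ℝ) ^ 2) →
      ∫ ω, T r ω ∂P = (∫ ω, Φ ω ∂P) ^ 2)
    (C : ℝ)
    (hC : C = ∑ r ∈ D.filter (fun r => r₀ < Real.sqrt ((r.1 : ℝ) ^ 2 + (r.2 : ℝ) ^ 2)),
      ((Xr r).card : ℝ) / (X.card : ℝ))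
    (hCpos : 0 < C)
    (Ψ : Ω → ℝ)
    (hΨ : ∀ ω, Ψ ω = (1 / C) *
      ∑ r ∈ D.filter (fun r => Real.sqrt ((r.1 : ℝ) ^ 2 + (r.2 : ℝ) ^ 2) ≤ r₀),
        (((Xr r).card : ℝ) / (X.card : ℝ)) * (T r ω - (Φ ω) ^ 2)) :
    ∫ ω, Ψ ω ∂P = ProbabilityTheory.variance Φ P :=
  tpc_predictor_unbiased_general P X B hBmeas hB01 Φ hΦ Xr hXr T hT D hD r₀ hmacro C hC hCpos Ψ hΨ
end

section
/- The expectation of the squared phase fraction equals the |X_r|-weighted average of the expectations of the two-point correlation function: E[Φ²] = (1/|X|) · Σ_r (|X_r|/|X|) · E[T_r]. -/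
open MeasureTheory Finset
open scoped Classical

/-- The expectation of the squared phase fraction equals the
`|X_r|`-weighted average of the expectations of the TPC function:
`E[Φ²] = (1/|X|) Σ_r (|X_r|/|X|) E[T_r]`. -/
theorem expectation_phase_fraction_sq
    {Ω : Type*} [MeasurableSpace Ω] (P : Measure Ω) [IsProbabilityMeasure P]
    (l₁ l₂ : ℕ) (hl₁ : 0 < l₁) (hl₂ : 0 < l₂)
    (X : Finset (ℤ × ℤ))
    (hX : X = (Finset.Ico (0 : ℤ) (l₁ : ℤ)) ×ˢ (Finset.Ico (0 : ℤ) (l₂ : ℤ)))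
    (B : ℤ × ℤ → Ω → ℝ)
    (hBmeas : ∀ x, Measurable (B x))
    (hB01 : ∀ x ω, B x ω = 0 ∨ B x ω = 1)
    (Φ : Ω → ℝ)
    (hΦ : ∀ ω, Φ ω = (1 / (X.card : ℝ)) * ∑ x ∈ X, B x ω)
    (Xr : ℤ × ℤ → Finset (ℤ × ℤ))
    (hXr : ∀ r, Xr r = X.filter (fun x => x + r ∈ X))
    (T : ℤ × ℤ → Ω → ℝ)
    (hT : ∀ r ω, T r ω = (1 / ((Xr r).card : ℝ)) * ∑ x ∈ Xr r, B x ω * B (x + r) ω)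
    (D : Finset (ℤ × ℤ))
    (hD : D = (X ×ˢ X).image (fun p => p.1 - p.2)) :
    ∫ ω, (Φ ω) ^ 2 ∂P =
      (1 / (X.card : ℝ)) * ∑ r ∈ D, (((Xr r).card : ℝ) / (X.card : ℝ)) * ∫ ω, T r ω ∂P := by
  classical
  have hXmem : ((0:ℤ), (0:ℤ)) ∈ X := by
    rw [hX]
    simp only [Finset.mem_product, Finset.mem_Ico]
    exact ⟨⟨le_refl _, by exact_mod_cast hl₁⟩, ⟨le_refl _, by exact_mod_cast hl₂⟩⟩
  have hn : (X.card : ℝ) ≠ 0 := by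
    have : 0 < X.card := Finset.card_pos.2 ⟨_, hXmem⟩
    exact_mod_cast this.ne'
  have hint : ∀ r : ℤ × ℤ, Integrable (T r) P := by
    intro r
    have h1 : Integrable (fun ω => (1 / ((Xr r).card : ℝ)) *
        ∑ x ∈ Xr r, B x ω * B (x + r) ω) P := by
      apply Integrable.const_mul
      apply integrable_finset_sum
      intro x _
      have hm : Measurable (fun ω => B x ω * B (x + r) ω) := (hBmeas x).mul (hBmeas _)
      refine ⟨hm.aestronglyMeasurable, ?_⟩
      apply HasFiniteIntegral.of_bounded (C := 1)
      filter_upwards with ω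
      rcases hB01 x ω with h1 | h1 <;> rcases hB01 (x + r) ω with h2 | h2 <;>
        simp [h1, h2]
    exact h1.congr (Filter.Eventually.of_forall fun ω => (hT r ω).symm)
  have hpt : ∀ ω, Φ ω ^ 2 =
      ∑ r ∈ D, (1 / (X.card : ℝ)) * ((((Xr r).card : ℝ) / (X.card : ℝ)) * T r ω) := by
    intro ω
    have hsq : Φ ω ^ 2 = (1 / (X.card : ℝ))^2 * ∑ p ∈ X ×ˢ X, B p.1 ω * B p.2 ω := by
      rw [hΦ, mul_pow, sq (∑ x ∈ X, B x ω), Finset.sum_mul_sum, ← Finset.sum_product']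
    have hbij : ∑ p ∈ X ×ˢ X, B p.1 ω * B p.2 ω
        = ∑ r ∈ D, ∑ x ∈ Xr r, B x ω * B (x + r) ω := by
      rw [Finset.sum_sigma']
      refine Finset.sum_nbij' (i := fun p => ⟨p.2 - p.1, p.1⟩)
        (j := fun q => (q.2, q.2 + q.1)) ?_ ?_ ?_ ?_ ?_
      · intro p hp
        rw [Finset.mem_product] at hp
        rw [Finset.mem_sigma]
        constructor
        · rw [hD]
          exact Finset.mem_image.2 ⟨(p.2, p.1), Finset.mem_product.2 ⟨hp.2, hp.1⟩, rfl⟩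
        · rw [hXr, Finset.mem_filter]
          exact ⟨hp.1, by simpa using hp.2⟩
      · intro q hq
        rw [Finset.mem_sigma] at hq
        have := hq.2
        rw [hXr, Finset.mem_filter] at this
        exact Finset.mem_product.2 ⟨this.1, this.2⟩
      · intro p _
        simp
      · intro q _
        ext <;> simp
      · intro p _
        simp
    rw [hsq, hbij, Finset.mul_sum]
    refine Finset.sum_congr rfl fun r _ => ?_
    rw [hT]
    by_cases hc : ((Xr r).card : ℝ) = 0
    · have he : Xr r = ∅ := by
        rcases Finset.eq_empty_or_nonempty (Xr r) with h | h
        · exact h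
        · exact absurd hc (by exact_mod_cast (Finset.card_pos.2 h).ne')
      simp [he, hc]
    · field_simp
  calc ∫ ω, Φ ω ^ 2 ∂P
      = ∫ ω, ∑ r ∈ D, (1 / (X.card : ℝ)) *
          ((((Xr r).card : ℝ) / (X.card : ℝ)) * T r ω) ∂P := by
        exact integral_congr_ae (Filter.Eventually.of_forall hpt)
    _ = ∑ r ∈ D, (1 / (X.card : ℝ)) *
          ((((Xr r).card : ℝ) / (X.card : ℝ)) * ∫ ω, T r ω ∂P) := by
        rw [integral_finset_sum]
        · exact Finset.sum_congr rfl fun r _ => by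
            rw [integral_const_mul, integral_const_mul]
        · intro r _
          exact ((hint r).const_mul _).const_mul _
    _ = (1 / (X.card : ℝ)) * ∑ r ∈ D,
          (((Xr r).card : ℝ) / (X.card : ℝ)) * ∫ ω, T r ω ∂P := by
        rw [Finset.mul_sum]
end

section
/- Suppose the material is macro-homogeneous at scale r₀. Then Σ_{r : |r| > r₀} (|X_r|/|X|) · (E[Φ²] − (E[Φ])²) = Σ_{r : |r| ≤ r₀} (|X_r|/|X|) · (E[T_r] − E[Φ²]), where both sums range over r ∈ ℤ² with X_r nonempty. -/
open MeasureTheory Finset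
open scoped Classical

/-- Under macro-homogeneity at scale `r₀`,
`Σ_{|r|>r₀} (|X_r|/|X|) (E[Φ²] − E[Φ]²) = Σ_{|r|≤r₀} (|X_r|/|X|) (E[T_r] − E[Φ²])`. -/
theorem far_near_balance
    {Ω : Type*} [MeasurableSpace Ω] (P : Measure Ω) [IsProbabilityMeasure P]
    (l₁ l₂ : ℕ) (hl₁ : 0 < l₁) (hl₂ : 0 < l₂)
    (X : Finset (ℤ × ℤ))
    (hX : X = (Finset.Ico (0 : ℤ) (l₁ : ℤ)) ×ˢ (Finset.Ico (0 : ℤ) (l₂ : ℤ)))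
    (B : ℤ × ℤ → Ω → ℝ)
    (hBmeas : ∀ x, Measurable (B x))
    (hB01 : ∀ x ω, B x ω = 0 ∨ B x ω = 1)
    (Φ : Ω → ℝ)
    (hΦ : ∀ ω, Φ ω = (1 / (X.card : ℝ)) * ∑ x ∈ X, B x ω)
    (Xr : ℤ × ℤ → Finset (ℤ × ℤ))
    (hXr : ∀ r, Xr r = X.filter (fun x => x + r ∈ X))
    (T : ℤ × ℤ → Ω → ℝ)
    (hT : ∀ r ω, T r ω = (1 / ((Xr r).card : ℝ)) * ∑ x ∈ Xr r, B x ω * B (x + r) ω)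
    (D : Finset (ℤ × ℤ))
    (hD : D = (X ×ˢ X).image (fun p => p.1 - p.2))
    (r₀ : ℝ) (hr₀ : 0 < r₀)
    (hmacro : ∀ r ∈ D, r₀ < Real.sqrt ((r.1 : ℝ) ^ 2 + (r.2 : ℝ) ^ 2) →
      ∫ ω, T r ω ∂P = (∫ ω, Φ ω ∂P) ^ 2) :
    ∑ r ∈ D.filter (fun r => r₀ < Real.sqrt ((r.1 : ℝ) ^ 2 + (r.2 : ℝ) ^ 2)),
        (((Xr r).card : ℝ) / (X.card : ℝ)) * ((∫ ω, (Φ ω) ^ 2 ∂P) - (∫ ω, Φ ω ∂P) ^ 2) =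
      ∑ r ∈ D.filter (fun r => Real.sqrt ((r.1 : ℝ) ^ 2 + (r.2 : ℝ) ^ 2) ≤ r₀),
        (((Xr r).card : ℝ) / (X.card : ℝ)) * ((∫ ω, T r ω ∂P) - ∫ ω, (Φ ω) ^ 2 ∂P) := by
  have hBint : ∀ x y : ℤ × ℤ, Integrable (fun ω => B x ω * B y ω) P := by
    intro x y
    apply (integrable_const (1:ℝ)).mono'
    · exact ((hBmeas x).mul (hBmeas y)).aestronglyMeasurable
    · filter_upwards with ω
      rcases hB01 x ω with h | h <;> rcases hB01 y ω with h' | h' <;>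
        simp [h, h']
  have hXne : X.Nonempty := by
    refine ⟨(0, 0), ?_⟩
    rw [hX]
    simp only [Finset.mem_product, Finset.mem_Ico, le_refl, true_and]
    exact ⟨by exact_mod_cast hl₁, by exact_mod_cast hl₂⟩
  have hn : (0:ℝ) < (X.card : ℝ) := by exact_mod_cast Finset.card_pos.2 hXne
  have hn0 : (X.card : ℝ) ≠ 0 := ne_of_gt hn
  -- key reindexing
  have key : ∀ f : ℤ × ℤ → ℤ × ℤ → ℝ,
      ∑ r ∈ D, ∑ x ∈ Xr r, f x (x + r) = ∑ p ∈ X ×ˢ X, f p.1 p.2 := by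
    intro f
    have hmaps : ∀ p ∈ X ×ˢ X, (fun p : (ℤ×ℤ)×(ℤ×ℤ) => p.2 - p.1) p ∈ D := by
      intro p hp
      rw [Finset.mem_product] at hp
      rw [hD]
      exact Finset.mem_image.2 ⟨(p.2, p.1), Finset.mem_product.2 ⟨hp.2, hp.1⟩, rfl⟩
    rw [← Finset.sum_fiberwise_of_maps_to hmaps (fun p => f p.1 p.2)]
    refine Finset.sum_congr rfl fun r hr => ?_
    refine Finset.sum_nbij' (fun x => (x, x + r)) (fun p => p.1) ?_ ?_ ?_ ?_ ?_
    · intro x hx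
      rw [hXr] at hx
      rw [Finset.mem_filter] at hx
      simp only [Finset.mem_filter, Finset.mem_product]
      exact ⟨⟨hx.1, hx.2⟩, by simp⟩
    · intro p hp
      simp only [Finset.mem_filter, Finset.mem_product] at hp
      rw [hXr, Finset.mem_filter]
      refine ⟨hp.1.1, ?_⟩
      have : p.1 + r = p.2 := by rw [← hp.2]; ring
      rw [this]; exact hp.1.2
    · intro x hx; rfl
    · intro p hp
      simp only [Finset.mem_filter, Finset.mem_product] at hp
      have h2 : p.1 + r = p.2 := by rw [← hp.2]; ring
      show (p.1, p.1 + r) = p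
      rw [h2]
    · intro x hx; rfl
  have hXrpos : ∀ r ∈ D, (0:ℝ) < ((Xr r).card : ℝ) := by
    intro r hr
    rw [hD] at hr
    obtain ⟨p, hp, rfl⟩ := Finset.mem_image.1 hr
    rw [Finset.mem_product] at hp
    have hmem : p.2 ∈ Xr (p.1 - p.2) := by
      rw [hXr, Finset.mem_filter]
      exact ⟨hp.2, by simpa using hp.1⟩
    exact_mod_cast Finset.card_pos.2 ⟨p.2, hmem⟩
  have hET : ∀ r ∈ D, ((Xr r).card : ℝ) * (∫ ω, T r ω ∂P)
      = ∑ x ∈ Xr r, ∫ ω, B x ω * B (x + r) ω ∂P := by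
    intro r hr
    have hc := hXrpos r hr
    have h1 : ∫ ω, T r ω ∂P
        = (1 / ((Xr r).card : ℝ)) * ∑ x ∈ Xr r, ∫ ω, B x ω * B (x + r) ω ∂P := by
      simp only [hT]
      rw [MeasureTheory.integral_const_mul,
        MeasureTheory.integral_finset_sum _ (fun x _ => hBint x (x + r))]
    rw [h1]
    field_simp
  have hEΦ2 : ((X.card : ℝ))^2 * ∫ ω, (Φ ω)^2 ∂P
      = ∑ p ∈ X ×ˢ X, ∫ ω, B p.1 ω * B p.2 ω ∂P := by
    have hpt : ∀ ω, (Φ ω)^2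
        = (1 / (X.card : ℝ))^2 * ∑ p ∈ X ×ˢ X, B p.1 ω * B p.2 ω := by
      intro ω
      rw [hΦ, mul_pow]
      congr 1
      rw [sq, Finset.sum_mul_sum]
      rw [Finset.sum_product]
    simp only [hpt]
    rw [MeasureTheory.integral_const_mul,
      MeasureTheory.integral_finset_sum _ (fun p _ => hBint p.1 p.2)]
    field_simp
  have hsumcard : ∑ r ∈ D, ((Xr r).card : ℝ) = ((X.card : ℝ))^2 := by
    have := key (fun _ _ => (1:ℝ))
    simpa [Finset.sum_const, Finset.card_product, sq] using this
  have main : ∑ r ∈ D, (((Xr r).card : ℝ) / (X.card : ℝ))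
      * ((∫ ω, T r ω ∂P) - ∫ ω, (Φ ω)^2 ∂P) = 0 := by
    have h1 : ∑ r ∈ D, (((Xr r).card : ℝ) / (X.card : ℝ)) * (∫ ω, T r ω ∂P)
        = (X.card : ℝ) * ∫ ω, (Φ ω)^2 ∂P := by
      have e1 : ∀ r ∈ D, (((Xr r).card : ℝ) / (X.card : ℝ)) * (∫ ω, T r ω ∂P)
          = (1 / (X.card : ℝ)) * ∑ x ∈ Xr r, ∫ ω, B x ω * B (x + r) ω ∂P := by
        intro r hr
        rw [← hET r hr]; ring
      rw [Finset.sum_congr rfl e1, ← Finset.mul_sum,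
        key (fun x y => ∫ ω, B x ω * B y ω ∂P), ← hEΦ2]
      field_simp
    have h2 : ∑ r ∈ D, (((Xr r).card : ℝ) / (X.card : ℝ)) * (∫ ω, (Φ ω)^2 ∂P)
        = (X.card : ℝ) * ∫ ω, (Φ ω)^2 ∂P := by
      rw [← Finset.sum_mul]
      rw [← Finset.sum_div, hsumcard]
      field_simp
    simp only [mul_sub]
    rw [Finset.sum_sub_distrib, h1, h2, sub_self]
  rw [← Finset.sum_filter_add_sum_filter_not D
    (fun r => r₀ < Real.sqrt ((r.1 : ℝ) ^ 2 + (r.2 : ℝ) ^ 2))] at main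
  have hfar : ∑ r ∈ D.filter (fun r => r₀ < Real.sqrt ((r.1 : ℝ) ^ 2 + (r.2 : ℝ) ^ 2)),
      (((Xr r).card : ℝ) / (X.card : ℝ)) * ((∫ ω, T r ω ∂P) - ∫ ω, (Φ ω)^2 ∂P)
      = - ∑ r ∈ D.filter (fun r => r₀ < Real.sqrt ((r.1 : ℝ) ^ 2 + (r.2 : ℝ) ^ 2)),
        (((Xr r).card : ℝ) / (X.card : ℝ)) * ((∫ ω, (Φ ω)^2 ∂P) - (∫ ω, Φ ω ∂P) ^ 2) := by
    rw [← Finset.sum_neg_distrib]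
    refine Finset.sum_congr rfl fun r hr => ?_
    rw [Finset.mem_filter] at hr
    rw [hmacro r hr.1 hr.2]
    ring
  rw [hfar] at main
  have hnotlt : D.filter (fun r => ¬ r₀ < Real.sqrt ((r.1 : ℝ) ^ 2 + (r.2 : ℝ) ^ 2))
      = D.filter (fun r => Real.sqrt ((r.1 : ℝ) ^ 2 + (r.2 : ℝ) ^ 2) ≤ r₀) := by
    apply Finset.filter_congr
    intro r _
    simp [not_lt]
  rw [hnotlt] at main
  linarith
end

section
/- Suppose the material is macro-homogeneous at scale r₀ and that C_{r₀} := Σ_{r : |r| > r₀} |X_r|/|X| is strictly positive. Then the variance of the phase fraction is given exactly by Var[Φ] = (1/C_{r₀}) · Σ_{r : |r| ≤ r₀} (|X_r|/|X|) · (E[T_r] − E[Φ²]). -/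
open MeasureTheory Finset
open scoped Classical

/-!
Every pair `(x, y) ∈ X × X` is counted exactly once as `(x, x + r)` with `r = y - x`, so
`∑_r |X_r| E[T_r] = ∑_{x,y} E[B_x B_y] = |X|² E[Φ²]` and `∑_r |X_r| = |X|²`. Hence the weighted
deviations `(|X_r|/|X|) (E[T_r] - E[Φ²])` sum to zero over all `r`. Under macro-homogeneity
every term with `|r| > r₀` equals `(|X_r|/|X|) (E[Φ]² - E[Φ²]) = -(|X_r|/|X|) Var[Φ]`, and these
add up to `-C_{r₀} Var[Φ]`; the terms with `|r| ≤ r₀` must compensate.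
-/

section Pairs

variable {G M : Type*} [AddCommGroup G] [DecidableEq G] [AddCommMonoid M]

theorem Finset.sum_image_sub_sum_filter_add_mem (X : Finset G) (F : G → G → M) :
    ∑ r ∈ (X ×ˢ X).image (fun p => p.1 - p.2), ∑ x ∈ X.filter (fun x => x + r ∈ X), F x (x + r)
      = ∑ x ∈ X, ∑ y ∈ X, F x y := by
  have hmaps : ∀ p ∈ X ×ˢ X, p.1 - p.2 ∈ (X ×ˢ X).image (fun p => p.1 - p.2) :=
    fun p hp => mem_image_of_mem _ hp
  rw [sum_comm, ← sum_product', ← sum_fiberwise_of_maps_to hmaps]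
  refine sum_congr rfl fun r _ => ?_
  refine sum_nbij' (fun x => (x + r, x)) Prod.snd ?_ ?_ (fun _ _ => rfl) ?_ (fun _ _ => rfl)
  · intro x hx
    simp only [mem_filter, mem_product] at hx ⊢
    exact ⟨⟨hx.2, hx.1⟩, add_sub_cancel_left x r⟩
  · rintro ⟨y, x⟩ hp
    simp only [mem_filter, mem_product] at hp ⊢
    rw [← hp.2, add_sub_cancel]
    exact ⟨hp.1.2, hp.1.1⟩
  · rintro ⟨y, x⟩ hp
    simp only [mem_filter, mem_product] at hp
    rw [← hp.2, add_sub_cancel]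

theorem Finset.sum_image_sub_card_filter_add_mem (X : Finset G) :
    ∑ r ∈ (X ×ˢ X).image (fun p => p.1 - p.2), #(X.filter (fun x => x + r ∈ X)) = #X ^ 2 := by
  simpa only [sum_const, smul_eq_mul, mul_one, sq] using
    X.sum_image_sub_sum_filter_add_mem fun _ _ => (1 : ℕ)

end Pairs

section Moments

variable {Ω ι : Type*} [MeasurableSpace Ω] {P : Measure Ω} {B : ι → Ω → ℝ}

theorem card_mul_integral_average (s : Finset ι) (hB : ∀ i ∈ s, Integrable (B i) P) :
    (#s : ℝ) * ∫ ω, 1 / (#s : ℝ) * ∑ i ∈ s, B i ω ∂P = ∑ i ∈ s, ∫ ω, B i ω ∂P := by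
  rcases s.eq_empty_or_nonempty with rfl | hs
  · simp
  · rw [integral_const_mul, integral_finsetSum s hB]
    field_simp [hs.card_pos.ne']

theorem card_sq_mul_integral_average_sq (s : Finset ι)
    (hB : ∀ i j, Integrable (fun ω => B i ω * B j ω) P) :
    (#s : ℝ) ^ 2 * ∫ ω, (1 / (#s : ℝ) * ∑ i ∈ s, B i ω) ^ 2 ∂P
      = ∑ i ∈ s, ∑ j ∈ s, ∫ ω, B i ω * B j ω ∂P := by
  have hsq : ∀ ω, (1 / (#s : ℝ) * ∑ i ∈ s, B i ω) ^ 2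
      = (1 / (#s : ℝ)) ^ 2 * ∑ i ∈ s, ∑ j ∈ s, B i ω * B j ω := fun ω => by
    rw [mul_pow, sq (∑ i ∈ s, B i ω), sum_mul_sum]
  simp_rw [hsq]
  rcases s.eq_empty_or_nonempty with rfl | hs
  · simp
  · rw [integral_const_mul, integral_finsetSum s fun i _ => integrable_finsetSum s fun j _ => hB i j]
    simp_rw [integral_finsetSum s fun j _ => hB _ j]
    field_simp [hs.card_pos.ne']

variable [AddCommGroup ι] [DecidableEq ι]

theorem sum_card_div_mul_integral_tpc_sub_integral_sq (X : Finset ι)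
    (hB : ∀ i j, Integrable (fun ω => B i ω * B j ω) P) :
    ∑ r ∈ (X ×ˢ X).image (fun p => p.1 - p.2),
      ((#(X.filter (fun x => x + r ∈ X)) : ℝ) / #X) *
        ((∫ ω, 1 / (#(X.filter (fun x => x + r ∈ X)) : ℝ) *
            ∑ x ∈ X.filter (fun x => x + r ∈ X), B x ω * B (x + r) ω ∂P)
          - ∫ ω, (1 / (#X : ℝ) * ∑ x ∈ X, B x ω) ^ 2 ∂P) = 0 := by
  have htpc := X.sum_image_sub_sum_filter_add_mem fun x y => ∫ ω, B x ω * B y ω ∂P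
  have hcard : ∑ r ∈ (X ×ˢ X).image (fun p => p.1 - p.2),
      (#(X.filter (fun x => x + r ∈ X)) : ℝ) = #X ^ 2 := by
    exact_mod_cast X.sum_image_sub_card_filter_add_mem
  simp_rw [← card_mul_integral_average _ fun x _ => hB x (x + _),
    ← card_sq_mul_integral_average_sq X hB] at htpc
  set S := ∫ ω, (1 / (#X : ℝ) * ∑ x ∈ X, B x ω) ^ 2 ∂P
  have hexpand : ∀ a e : ℝ, a / #X * (e - S) = 1 / #X * (a * e) - S / #X * a := fun a e => by
    ring
  simp_rw [hexpand, sum_sub_distrib, ← mul_sum, htpc, hcard]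
  rcases eq_or_ne (#X : ℝ) 0 with hX | hX
  · simp [hX]
  · field_simp
    ring

end Moments

theorem variance_from_tpc_expectations_general
    {Ω : Type*} [MeasurableSpace Ω] (P : Measure Ω) [IsProbabilityMeasure P]
    (X : Finset (ℤ × ℤ))
    (B : ℤ × ℤ → Ω → ℝ)
    (hBmeas : ∀ x, Measurable (B x))
    (hB01 : ∀ x ω, B x ω = 0 ∨ B x ω = 1)
    (Φ : Ω → ℝ)
    (hΦ : ∀ ω, Φ ω = (1 / (X.card : ℝ)) * ∑ x ∈ X, B x ω)
    (Xr : ℤ × ℤ → Finset (ℤ × ℤ))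
    (hXr : ∀ r, Xr r = X.filter (fun x => x + r ∈ X))
    (T : ℤ × ℤ → Ω → ℝ)
    (hT : ∀ r ω, T r ω = (1 / ((Xr r).card : ℝ)) * ∑ x ∈ Xr r, B x ω * B (x + r) ω)
    (D : Finset (ℤ × ℤ))
    (hD : D = (X ×ˢ X).image (fun p => p.1 - p.2))
    (r₀ : ℝ)
    (hmacro : ∀ r ∈ D, r₀ < Real.sqrt ((r.1 : ℝ) ^ 2 + (r.2 : ℝ) ^ 2) →
      ∫ ω, T r ω ∂P = (∫ ω, Φ ω ∂P) ^ 2)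
    (C : ℝ)
    (hC : C = ∑ r ∈ D.filter (fun r => r₀ < Real.sqrt ((r.1 : ℝ) ^ 2 + (r.2 : ℝ) ^ 2)),
      ((Xr r).card : ℝ) / (X.card : ℝ))
    (hCpos : 0 < C) :
    ProbabilityTheory.variance Φ P = (1 / C) *
      ∑ r ∈ D.filter (fun r => Real.sqrt ((r.1 : ℝ) ^ 2 + (r.2 : ℝ) ^ 2) ≤ r₀),
        (((Xr r).card : ℝ) / (X.card : ℝ)) * ((∫ ω, T r ω ∂P) - ∫ ω, (Φ ω) ^ 2 ∂P) := by
  have hBLp : ∀ x, MemLp (B x) ⊤ P := fun x =>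
    memLp_top_of_bound (hBmeas x).aestronglyMeasurable 1
      (ae_of_all _ fun ω => by rcases hB01 x ω with h | h <;> simp [h])
  have hint : ∀ x y, Integrable (fun ω => B x ω * B y ω) P := fun x y =>
    ((hBLp y).mul (hBLp x)).integrable le_top
  have hΦLp : MemLp Φ 2 P := by
    rw [funext hΦ]
    exact ((memLp_finsetSum X fun x _ => hBLp x).const_mul _).mono_exponent le_top
  have hsum := sum_card_div_mul_integral_tpc_sub_integral_sq X hint
  simp only [← hXr, ← hD, ← hΦ, ← hT] at hsum
  have hfar : ∑ r ∈ D.filter (fun r => r₀ < Real.sqrt ((r.1 : ℝ) ^ 2 + (r.2 : ℝ) ^ 2)),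
      (((Xr r).card : ℝ) / (X.card : ℝ)) * ((∫ ω, T r ω ∂P) - ∫ ω, (Φ ω) ^ 2 ∂P)
        = C * ((∫ ω, Φ ω ∂P) ^ 2 - ∫ ω, (Φ ω) ^ 2 ∂P) := by
    rw [hC, sum_mul]
    exact sum_congr rfl fun r hr => by rw [hmacro r (mem_filter.1 hr).1 (mem_filter.1 hr).2]
  rw [← sum_filter_add_sum_filter_not D fun r => Real.sqrt ((r.1 : ℝ) ^ 2 + (r.2 : ℝ) ^ 2) ≤ r₀]
    at hsum
  simp only [not_le, hfar] at hsum
  rw [ProbabilityTheory.variance_eq_sub hΦLp, eq_neg_of_add_eq_zero_left hsum]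
  field_simp
  simp only [Pi.pow_apply]
  ring

/-- Under macro-homogeneity at scale `r₀` and `C_{r₀} > 0`,
`Var[Φ] = (1/C_{r₀}) Σ_{|r|≤r₀} (|X_r|/|X|) (E[T_r] − E[Φ²])`. -/
theorem variance_from_tpc_expectations
    {Ω : Type*} [MeasurableSpace Ω] (P : Measure Ω) [IsProbabilityMeasure P]
    (l₁ l₂ : ℕ) (hl₁ : 0 < l₁) (hl₂ : 0 < l₂)
    (X : Finset (ℤ × ℤ))
    (hX : X = (Finset.Ico (0 : ℤ) (l₁ : ℤ)) ×ˢ (Finset.Ico (0 : ℤ) (l₂ : ℤ)))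
    (B : ℤ × ℤ → Ω → ℝ)
    (hBmeas : ∀ x, Measurable (B x))
    (hB01 : ∀ x ω, B x ω = 0 ∨ B x ω = 1)
    (Φ : Ω → ℝ)
    (hΦ : ∀ ω, Φ ω = (1 / (X.card : ℝ)) * ∑ x ∈ X, B x ω)
    (Xr : ℤ × ℤ → Finset (ℤ × ℤ))
    (hXr : ∀ r, Xr r = X.filter (fun x => x + r ∈ X))
    (T : ℤ × ℤ → Ω → ℝ)
    (hT : ∀ r ω, T r ω = (1 / ((Xr r).card : ℝ)) * ∑ x ∈ Xr r, B x ω * B (x + r) ω)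
    (D : Finset (ℤ × ℤ))
    (hD : D = (X ×ˢ X).image (fun p => p.1 - p.2))
    (r₀ : ℝ) (hr₀ : 0 < r₀)
    (hmacro : ∀ r ∈ D, r₀ < Real.sqrt ((r.1 : ℝ) ^ 2 + (r.2 : ℝ) ^ 2) →
      ∫ ω, T r ω ∂P = (∫ ω, Φ ω ∂P) ^ 2)
    (C : ℝ)
    (hC : C = ∑ r ∈ D.filter (fun r => r₀ < Real.sqrt ((r.1 : ℝ) ^ 2 + (r.2 : ℝ) ^ 2)),
      ((Xr r).card : ℝ) / (X.card : ℝ))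
    (hCpos : 0 < C) :
    ProbabilityTheory.variance Φ P = (1 / C) *
      ∑ r ∈ D.filter (fun r => Real.sqrt ((r.1 : ℝ) ^ 2 + (r.2 : ℝ) ^ 2) ≤ r₀),
        (((Xr r).card : ℝ) / (X.card : ℝ)) * ((∫ ω, T r ω ∂P) - ∫ ω, (Φ ω) ^ 2 ∂P) :=
  variance_from_tpc_expectations_general P X B hBmeas hB01 Φ hΦ Xr hXr T hT D hD r₀ hmacro C hC
    hCpos
end

section
/- (d-dimensional version of the main theorem.) Let d ≥ 1 and let X = {0,…,l₁−1} × ⋯ × {0,…,l_d−1} ⊆ ℤ^d with each l_i a positive integer. Suppose the material is macro-homogeneous at scale r₀ and that C_{r₀} := Σ_{r : |r| > r₀} |X_r|/|X| is strictly positive. Define Ψ(ω) = (1/C_{r₀}) · Σ_{r : |r| ≤ r₀} (|X_r|/|X|) · (T_r(ω) − Φ(ω)²). Then E[Ψ] = Var[Φ]. -/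
open MeasureTheory Finset
open scoped Classical

/-!
Each ordered pair `(x, y)` of voxels is counted exactly once as `(x, x + r)` with `r = y - x`,
so `∑_r |X_r| T_r = (∑_x B_x)² = |X|² Φ²` and `∑_r |X_r| = |X|²`. Hence the weighted deviations
`(|X_r| / |X|) (T_r - Φ²)` sum to zero over all `r`, and the sum over `|r| ≤ r₀` is minus the sum
over `|r| > r₀`. By macro-homogeneity the latter has expectation `C ((E Φ)² - E[Φ²]) = -C Var Φ`.
-/

section Combinatorics

variable {G : Type*} [AddCommGroup G] [DecidableEq G]

noncomputable def overlap (X : Finset G) (r : G) : Finset G := X.filter (fun x => x + r ∈ X)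

noncomputable def differenceSet (X : Finset G) : Finset G := (X ×ˢ X).image (fun p => p.1 - p.2)

theorem sum_differenceSet_sum_overlap {M : Type*} [AddCommMonoid M] (X : Finset G)
    (f : G → G → M) :
    ∑ r ∈ differenceSet X, ∑ x ∈ overlap X r, f x (x + r) = ∑ p ∈ X ×ˢ X, f p.1 p.2 := by
  rw [differenceSet, sum_sigma']
  refine sum_nbij' (fun q => (q.2, q.2 + q.1)) (fun p => ⟨p.2 - p.1, p.1⟩) ?_ ?_ ?_ ?_ ?_
  · rintro ⟨r, x⟩ hq
    simp only [mem_sigma, overlap, mem_filter] at hq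
    exact mem_product.2 ⟨hq.2.1, hq.2.2⟩
  · rintro ⟨a, b⟩ hp
    simp only [mem_product] at hp
    simp only [mem_sigma, mem_image, mem_product, overlap, mem_filter, add_sub_cancel]
    exact ⟨⟨(b, a), ⟨hp.2, hp.1⟩, rfl⟩, hp.1, hp.2⟩
  · rintro ⟨r, x⟩ _
    simp
  · rintro ⟨a, b⟩ _
    simp
  · rintro ⟨r, x⟩ _
    rfl

theorem sum_differenceSet_card_overlap (X : Finset G) :
    ∑ r ∈ differenceSet X, (overlap X r).card = X.card ^ 2 := by
  have h := sum_differenceSet_sum_overlap X (fun _ _ => 1)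
  simp only [sum_const, smul_eq_mul, mul_one, card_product] at h
  rw [h, sq]

theorem sum_differenceSet_sum_overlap_mul {R : Type*} [CommSemiring R] (X : Finset G)
    (b : G → R) :
    ∑ r ∈ differenceSet X, ∑ x ∈ overlap X r, b x * b (x + r) = (∑ x ∈ X, b x) ^ 2 := by
  rw [sum_differenceSet_sum_overlap X (fun x y => b x * b y), sum_product, sq, sum_mul_sum]

theorem card_mul_one_div_card_mul_sum_s11 {α : Type*} (s : Finset α) (g : α → ℝ) :
    (s.card : ℝ) * ((1 / s.card) * ∑ x ∈ s, g x) = ∑ x ∈ s, g x := by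
  rcases s.eq_empty_or_nonempty with rfl | hs
  · simp
  · have : (s.card : ℝ) ≠ 0 := by exact_mod_cast hs.card_pos.ne'
    field_simp

theorem sum_differenceSet_card_div_mul_sub_sq_eq_zero (X : Finset G) (b : G → ℝ) :
    ∑ r ∈ differenceSet X, ((overlap X r).card / X.card : ℝ) *
      ((1 / (overlap X r).card) * ∑ x ∈ overlap X r, b x * b (x + r)
        - ((1 / X.card) * ∑ x ∈ X, b x) ^ 2) = 0 := by
  have hcorr : ∑ r ∈ differenceSet X, ((overlap X r).card / X.card : ℝ) *
      ((1 / (overlap X r).card) * ∑ x ∈ overlap X r, b x * b (x + r))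
        = (1 / X.card) * (∑ x ∈ X, b x) ^ 2 := by
    rw [← sum_differenceSet_sum_overlap_mul, mul_sum]
    refine sum_congr rfl fun r _ => ?_
    rw [div_eq_inv_mul, mul_assoc, card_mul_one_div_card_mul_sum_s11, one_div]
  have hweight : ∑ r ∈ differenceSet X, ((overlap X r).card / X.card : ℝ) = X.card := by
    rw [← sum_div, ← Nat.cast_sum, sum_differenceSet_card_overlap, Nat.cast_pow]
    rcases eq_or_ne (X.card : ℝ) 0 with h | h
    · simp [h]
    · field_simp
  simp_rw [mul_sub, sum_sub_distrib, ← sum_mul, hcorr, hweight]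
  rcases eq_or_ne (X.card : ℝ) 0 with h | h
  · simp [h]
  · field_simp
    ring

end Combinatorics

theorem integral_sum_mul_sub_sq_eq_neg_mul_variance {Ω ι : Type*} [MeasurableSpace Ω]
    {P : Measure Ω} [IsProbabilityMeasure P] (F : Finset ι) (w : ι → ℝ) {T : ι → Ω → ℝ}
    {Φ : Ω → ℝ} (hT : ∀ r ∈ F, Integrable (T r) P) (hΦ : MemLp Φ 2 P)
    (hmean : ∀ r ∈ F, ∫ ω, T r ω ∂P = (∫ ω, Φ ω ∂P) ^ 2) :
    ∫ ω, ∑ r ∈ F, w r * (T r ω - Φ ω ^ 2) ∂P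
      = -(∑ r ∈ F, w r) * ProbabilityTheory.variance Φ P := by
  have hint : ∀ r ∈ F, Integrable (fun ω => w r * (T r ω - Φ ω ^ 2)) P :=
    fun r hr => ((hT r hr).sub hΦ.integrable_sq).const_mul (w r)
  rw [integral_finsetSum F hint, neg_mul, sum_mul, ← sum_neg_distrib]
  refine sum_congr rfl fun r hr => ?_
  rw [integral_const_mul, integral_sub (hT r hr) hΦ.integrable_sq, hmean r hr,
    ProbabilityTheory.variance_eq_sub hΦ]
  simp only [Pi.pow_apply]
  ring

theorem tpc_predictor_unbiased_dim_general
    {Ω : Type*} [MeasurableSpace Ω] (P : Measure Ω) [IsProbabilityMeasure P]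
    (d : ℕ)
    (X : Finset (Fin d → ℤ))
    (B : (Fin d → ℤ) → Ω → ℝ)
    (hBmeas : ∀ x, Measurable (B x))
    (hB01 : ∀ x ω, B x ω = 0 ∨ B x ω = 1)
    (Φ : Ω → ℝ)
    (hΦ : ∀ ω, Φ ω = (1 / (X.card : ℝ)) * ∑ x ∈ X, B x ω)
    (Xr : (Fin d → ℤ) → Finset (Fin d → ℤ))
    (hXr : ∀ r, Xr r = X.filter (fun x => x + r ∈ X))
    (T : (Fin d → ℤ) → Ω → ℝ)
    (hT : ∀ r ω, T r ω = (1 / ((Xr r).card : ℝ)) * ∑ x ∈ Xr r, B x ω * B (x + r) ω)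
    (D : Finset (Fin d → ℤ))
    (hD : D = (X ×ˢ X).image (fun p => p.1 - p.2))
    (r₀ : ℝ)
    (hmacro : ∀ r ∈ D, r₀ < Real.sqrt (∑ i, ((r i : ℝ)) ^ 2) →
      ∫ ω, T r ω ∂P = (∫ ω, Φ ω ∂P) ^ 2)
    (C : ℝ)
    (hC : C = ∑ r ∈ D.filter (fun r => r₀ < Real.sqrt (∑ i, ((r i : ℝ)) ^ 2)),
      ((Xr r).card : ℝ) / (X.card : ℝ))
    (hCpos : 0 < C)
    (Ψ : Ω → ℝ)
    (hΨ : ∀ ω, Ψ ω = (1 / C) *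
      ∑ r ∈ D.filter (fun r => Real.sqrt (∑ i, ((r i : ℝ)) ^ 2) ≤ r₀),
        (((Xr r).card : ℝ) / (X.card : ℝ)) * (T r ω - (Φ ω) ^ 2)) :
    ∫ ω, Ψ ω ∂P = ProbabilityTheory.variance Φ P := by
  obtain rfl : Xr = overlap X := funext hXr
  obtain rfl : D = differenceSet X := hD
  have hBLp : ∀ x, MemLp (B x) 2 P := fun x =>
    MemLp.of_bound (hBmeas x).aestronglyMeasurable 1 <| ae_of_all _ fun ω => by
      rcases hB01 x ω with h | h <;> simp [h]
  have hΦLp : MemLp Φ 2 P := by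
    rw [funext hΦ]
    exact (memLp_finsetSum X fun x _ => hBLp x).const_mul _
  have hTint : ∀ r, Integrable (T r) P := fun r => by
    rw [funext (hT r)]
    exact (integrable_finsetSum _ fun x _ => (hBLp x).integrable_mul (hBLp (x + r))).const_mul _
  set F := (differenceSet X).filter (fun r => r₀ < Real.sqrt (∑ i, ((r i : ℝ)) ^ 2))
  set w : (Fin d → ℤ) → ℝ := fun r => ((overlap X r).card : ℝ) / X.card
  have hΨ_far : ∀ ω, Ψ ω = -(1 / C) * ∑ r ∈ F, w r * (T r ω - Φ ω ^ 2) := fun ω => by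
    have htotal := sum_differenceSet_card_div_mul_sub_sq_eq_zero X (B · ω)
    rw [← sum_filter_add_sum_filter_not _ (fun r => r₀ < Real.sqrt (∑ i, ((r i : ℝ)) ^ 2))]
      at htotal
    simp only [not_lt, ← hT, ← hΦ] at htotal
    rw [hΨ, eq_neg_of_add_eq_zero_right htotal]
    ring
  calc ∫ ω, Ψ ω ∂P = -(1 / C) * ∫ ω, ∑ r ∈ F, w r * (T r ω - Φ ω ^ 2) ∂P := by
        simp_rw [hΨ_far]
        exact integral_const_mul _ _
    _ = -(1 / C) * (-C * ProbabilityTheory.variance Φ P) := by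
        rw [integral_sum_mul_sub_sq_eq_neg_mul_variance F w (fun r _ => hTint r) hΦLp
          (fun r hr => hmacro r (mem_filter.1 hr).1 (mem_filter.1 hr).2), ← hC]
    _ = ProbabilityTheory.variance Φ P := by
        field_simp [hCpos.ne']

/-- d-dimensional version of the main theorem. For the voxel
domain `X = Π_i {0,…,l_i−1} ⊆ ℤ^d`, under macro-homogeneity at scale `r₀` and
`C_{r₀} > 0`, the predictor `Ψ(ω) = (1/C) Σ_{|r|≤r₀} (|X_r|/|X|)(T_r(ω) − Φ(ω)²)`
satisfies `E[Ψ] = Var[Φ]`. -/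
theorem tpc_predictor_unbiased_dim
    {Ω : Type*} [MeasurableSpace Ω] (P : Measure Ω) [IsProbabilityMeasure P]
    (d : ℕ) (hd : 1 ≤ d)
    (l : Fin d → ℕ) (hl : ∀ i, 0 < l i)
    (X : Finset (Fin d → ℤ))
    (hX : X = Fintype.piFinset (fun i => Finset.Ico (0 : ℤ) ((l i : ℤ))))
    (B : (Fin d → ℤ) → Ω → ℝ)
    (hBmeas : ∀ x, Measurable (B x))
    (hB01 : ∀ x ω, B x ω = 0 ∨ B x ω = 1)
    (Φ : Ω → ℝ)
    (hΦ : ∀ ω, Φ ω = (1 / (X.card : ℝ)) * ∑ x ∈ X, B x ω)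
    (Xr : (Fin d → ℤ) → Finset (Fin d → ℤ))
    (hXr : ∀ r, Xr r = X.filter (fun x => x + r ∈ X))
    (T : (Fin d → ℤ) → Ω → ℝ)
    (hT : ∀ r ω, T r ω = (1 / ((Xr r).card : ℝ)) * ∑ x ∈ Xr r, B x ω * B (x + r) ω)
    (D : Finset (Fin d → ℤ))
    (hD : D = (X ×ˢ X).image (fun p => p.1 - p.2))
    (r₀ : ℝ) (hr₀ : 0 < r₀)
    (hmacro : ∀ r ∈ D, r₀ < Real.sqrt (∑ i, ((r i : ℝ)) ^ 2) →
      ∫ ω, T r ω ∂P = (∫ ω, Φ ω ∂P) ^ 2)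
    (C : ℝ)
    (hC : C = ∑ r ∈ D.filter (fun r => r₀ < Real.sqrt (∑ i, ((r i : ℝ)) ^ 2)),
      ((Xr r).card : ℝ) / (X.card : ℝ))
    (hCpos : 0 < C)
    (Ψ : Ω → ℝ)
    (hΨ : ∀ ω, Ψ ω = (1 / C) *
      ∑ r ∈ D.filter (fun r => Real.sqrt (∑ i, ((r i : ℝ)) ^ 2) ≤ r₀),
        (((Xr r).card : ℝ) / (X.card : ℝ)) * (T r ω - (Φ ω) ^ 2)) :
    ∫ ω, Ψ ω ∂P = ProbabilityTheory.variance Φ P :=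
  tpc_predictor_unbiased_dim_general P d X B hBmeas hB01 Φ hΦ Xr hXr T hT D hD r₀ hmacro C hC hCpos
    Ψ hΨ
end
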